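/- arXiv:1502.07084 — 2 statements merged into one kernel-verified Lean document; each statement's English description precedes it below -/
import Mathlib

section
/- Let X be a real Banach space whose norm locally depends upon finitely many coordinates and let Y be a strictly convex real Banach space. Then every norm attaining bounded linear operator T : X → Y has finite rank (i.e., its range is a finite-dimensional subspace of Y). -/
/-- A bounded linear operator attains its norm if there is a norm-one vector where
the operator norm is achieved. -/
def NormAttaining {X Y : Type*} [NormedAddCommGroup X] [NormedSpace ℝ X]
    [NormedAddCommGroup Y] [NormedSpace ℝ Y] (T : X →L[ℝ] Y) : Prop :=
  ∃ x : X, ‖x‖ = 1 ∧ ‖T x‖ = ‖T‖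

/-- The norm of `X` locally depends upon finitely many coordinates: for every `x ≠ 0` there are
`ε > 0`, finitely many continuous linear functionals `f₁, …, fₙ` and a continuous function
`φ : ℝⁿ → ℝ` such that `‖y‖ = φ (f₁ y, …, fₙ y)` whenever `‖x - y‖ < ε`. -/
def NormLocallyDependsOnFinitelyManyCoordinates (X : Type*) [NormedAddCommGroup X]
    [NormedSpace ℝ X] : Prop :=
  ∀ x : X, x ≠ 0 → ∃ (ε : ℝ), 0 < ε ∧ ∃ (n : ℕ) (f : Fin n → X →L[ℝ] ℝ)
    (φ : (Fin n → ℝ) → ℝ), Continuous φ ∧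
      ∀ y : X, ‖x - y‖ < ε → ‖y‖ = φ (fun i => f i y)

/-!
Let `T` attain its norm at `x`. Near `x` the norm of `X` is a function of finitely many
functionals, so it is constant on `x + w` for all small `w` in a subspace `K` of finite
codimension. Then `x ± w` lie in the unit ball while their midpoint `x` is mapped onto the sphere of
radius `‖T‖`; strict convexity of `Y` forces `T (x + w) = T (x - w)`, i.e. `T w = 0`. Hence `T`
vanishes on `K` and factors through the finite-dimensional quotient `X ⧸ K`.
-/

theorem eq_zero_of_norm_add_le_of_norm_sub_le {E : Type*} [NormedAddCommGroup E]
    [NormedSpace ℝ E] [StrictConvexSpace ℝ E] {u v : E} (hadd : ‖u + v‖ ≤ ‖u‖)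
    (hsub : ‖u - v‖ ≤ ‖u‖) : v = 0 := by
  have hsum : (u + v) + (u - v) = (2 : ℝ) • u := by rw [two_smul]; abel
  have hnorm_sum : ‖(u + v) + (u - v)‖ = 2 * ‖u‖ := by rw [hsum, norm_smul, Real.norm_two]
  have hle : 2 * ‖u‖ ≤ ‖u + v‖ + ‖u - v‖ := hnorm_sum ▸ norm_add_le _ _
  have heq : u + v = u - v :=
    eq_of_norm_eq_of_norm_add_eq (by linarith) (by rw [hnorm_sum]; linarith)
  rw [sub_eq_add_neg, add_right_inj, eq_neg_iff_add_eq_zero, ← two_smul ℝ, smul_eq_zero] at heq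
  exact heq.resolve_left two_ne_zero

section StrictConvexCodomain

variable {X Y : Type*} [NormedAddCommGroup X] [NormedSpace ℝ X] [NormedAddCommGroup Y]
  [NormedSpace ℝ Y] [StrictConvexSpace ℝ Y]

theorem ContinuousLinearMap.apply_eq_zero_of_norm_add_le_of_norm_sub_le (T : X →L[ℝ] Y) {x w : X}
    (hTx : ‖T x‖ = ‖T‖ * ‖x‖) (hadd : ‖x + w‖ ≤ ‖x‖) (hsub : ‖x - w‖ ≤ ‖x‖) : T w = 0 := by
  have hle : ∀ y, ‖y‖ ≤ ‖x‖ → ‖T y‖ ≤ ‖T x‖ := fun y hy =>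
    hTx ▸ T.le_opNorm_of_le hy
  exact eq_zero_of_norm_add_le_of_norm_sub_le (by simpa using hle _ hadd)
    (by simpa using hle _ hsub)

open Topology in
theorem ContinuousLinearMap.le_ker_of_norm_add_eq (T : X →L[ℝ] Y) {x : X}
    (hTx : ‖T x‖ = ‖T‖ * ‖x‖) {K : Submodule ℝ X} {ε : ℝ} (hε : 0 < ε)
    (hK : ∀ w ∈ K, ‖w‖ < ε → ‖x + w‖ = ‖x‖) :
    K ≤ LinearMap.ker (T : X →ₗ[ℝ] Y) := by
  intro z hz
  have hsmall : ∀ᶠ c in 𝓝[≠] (0 : ℝ), ‖c • z‖ < ε := by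
    have hcont : Continuous fun c : ℝ => ‖c • z‖ := (continuous_id.smul continuous_const).norm
    exact nhdsWithin_le_nhds (hcont.tendsto' 0 0 (by simp) |>.eventually (eventually_lt_nhds hε))
  obtain ⟨c, hcz, hc⟩ := (hsmall.and self_mem_nhdsWithin).exists
  have hTcz : T (c • z) = 0 :=
    T.apply_eq_zero_of_norm_add_le_of_norm_sub_le hTx (hK _ (K.smul_mem c hz) hcz).le
      (by rw [sub_eq_add_neg]; exact (hK _ (K.neg_mem (K.smul_mem c hz)) (by rwa [norm_neg])).le)
  exact (smul_eq_zero.mp (T.map_smul c z ▸ hTcz)).resolve_left hc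

end StrictConvexCodomain

theorem LinearMap.finite_range_of_le_ker {R M N : Type*} [Ring R] [AddCommGroup M] [Module R M]
    [AddCommGroup N] [Module R N] {K : Submodule R M} [Module.Finite R (M ⧸ K)] (f : M →ₗ[R] N)
    (h : K ≤ LinearMap.ker f) : Module.Finite R (LinearMap.range f) :=
  Submodule.range_liftQ K f h ▸ inferInstance

theorem NormLocallyDependsOnFinitelyManyCoordinates.exists_norm_add_eq {X : Type*}
    [NormedAddCommGroup X] [NormedSpace ℝ X] (hX : NormLocallyDependsOnFinitelyManyCoordinates X)
    {x : X} (hx : x ≠ 0) :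
    ∃ ε > 0, ∃ K : Submodule ℝ X, FiniteDimensional ℝ (X ⧸ K) ∧
      ∀ w ∈ K, ‖w‖ < ε → ‖x + w‖ = ‖x‖ := by
  obtain ⟨ε, hε, n, f, φ, -, hφ⟩ := hX x hx
  let g : X →ₗ[ℝ] (Fin n → ℝ) := LinearMap.pi fun i => (f i : X →ₗ[ℝ] ℝ)
  refine ⟨ε, hε, LinearMap.ker g, Module.Finite.equiv g.quotKerEquivRange.symm, fun w hw hwε => ?_⟩
  have hfw : ∀ i, f i w = 0 := fun i => congrFun hw i
  rw [hφ (x + w) (by simpa using hwε), hφ x (by simpa using hε)]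
  simp [hfw]

theorem stmt_5_general (X : Type*) [NormedAddCommGroup X] [NormedSpace ℝ X]
    (hX : NormLocallyDependsOnFinitelyManyCoordinates X)
    (Y : Type*) [NormedAddCommGroup Y] [NormedSpace ℝ Y]
    [StrictConvexSpace ℝ Y]
    (T : X →L[ℝ] Y) (hT : NormAttaining T) :
    FiniteDimensional ℝ (LinearMap.range (T : X →ₗ[ℝ] Y)) := by
  obtain ⟨x, hx1, hTx⟩ := hT
  have hx0 : x ≠ 0 := norm_ne_zero_iff.mp (hx1 ▸ one_ne_zero)
  obtain ⟨ε, hε, K, hK, hnorm⟩ := hX.exists_norm_add_eq hx0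
  exact LinearMap.finite_range_of_le_ker (T : X →ₗ[ℝ] Y)
    (T.le_ker_of_norm_add_eq (by rw [hTx, hx1, mul_one]) hε hnorm)

/-- If the norm of the real Banach space `X` locally depends upon finitely many coordinates and
`Y` is a strictly convex real Banach space, then every norm attaining bounded linear operator
`T : X → Y` has finite rank. -/
theorem stmt_5 (X : Type*) [NormedAddCommGroup X] [NormedSpace ℝ X] [CompleteSpace X]
    (hX : NormLocallyDependsOnFinitelyManyCoordinates X)
    (Y : Type*) [NormedAddCommGroup Y] [NormedSpace ℝ Y] [CompleteSpace Y]
    [StrictConvexSpace ℝ Y]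
    (T : X →L[ℝ] Y) (hT : NormAttaining T) :
    FiniteDimensional ℝ (LinearMap.range (T : X →ₗ[ℝ] Y)) :=
  stmt_5_general X hX Y T hT
end

section
/- Let X be an infinite-dimensional closed subspace of c₀. Then X fails Lindenstrauss property A; that is, there exist a real Banach space Y and a bounded linear operator T : X → Y such that T does not belong to the closure (in operator norm) of the set of norm attaining bounded linear operators from X to Y. -/
/-!
Renorm `c₀` by the graph norm `‖f‖ + ‖L f‖` of the injective operator `L f = (f n 2⁻ⁿ)ₙ` into
`ℓ²`. The resulting space `Y` is a Banach space isomorphic to `c₀`, and it is strictly convex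
because `ℓ²` is. Let `T : X → Y` be the inclusion, so `‖u‖ ≤ ‖T u‖`.

If `S : X → Y` attains its norm at `x`, pick `N` with `|x n| ≤ 1/2` for `n ≥ N`. Since `X` is
infinite-dimensional it contains some `u ≠ 0` with `‖u‖ = 1/2` vanishing on the first `N`
coordinates, and then `‖x ± u‖ ≤ 1`. The vectors `S (x ± u)` lie in the ball of radius `‖S‖`
and their midpoint `S x` lies on its sphere, so strict convexity forces `S u = 0`. Hence
`‖u‖ ≤ ‖(T - S) u‖`, so `‖T - S‖ ≥ 1`.
-/

open scoped ZeroAtInfty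

open scoped ENNReal

noncomputable section

variable {E F : Type*} [NormedAddCommGroup E] [NormedSpace ℝ E]
  [NormedAddCommGroup F] [NormedSpace ℝ F]

def GraphNormed (_L : E →L[ℝ] F) : Type _ := E

namespace GraphNormed

variable (L : E →L[ℝ] F)

instance : AddCommGroup (GraphNormed L) := inferInstanceAs (AddCommGroup E)
instance : Module ℝ (GraphNormed L) := inferInstanceAs (Module ℝ E)

def linearEquiv : E ≃ₗ[ℝ] GraphNormed L := LinearEquiv.refl ℝ E

instance : Norm (GraphNormed L) :=
  ⟨fun y => ‖(linearEquiv L).symm y‖ + ‖L ((linearEquiv L).symm y)‖⟩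

theorem norm_linearEquiv (e : E) : ‖linearEquiv L e‖ = ‖e‖ + ‖L e‖ := rfl

theorem normedSpaceCore : NormedSpace.Core ℝ (GraphNormed L) where
  norm_nonneg y := add_nonneg (norm_nonneg _) (norm_nonneg _)
  norm_smul c y := by
    change ‖_‖ + ‖_‖ = ‖c‖ * (‖_‖ + ‖_‖)
    rw [map_smul, map_smul, norm_smul, norm_smul, mul_add]
  norm_triangle y z := by
    change ‖_‖ + ‖_‖ ≤ (‖_‖ + ‖_‖) + (‖_‖ + ‖_‖)
    rw [map_add, map_add]
    linarith [norm_add_le ((linearEquiv L).symm y) ((linearEquiv L).symm z),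
      norm_add_le (L ((linearEquiv L).symm y)) (L ((linearEquiv L).symm z))]
  norm_eq_zero_iff y := by
    refine ⟨fun h => ?_, fun h => by change ‖_‖ + ‖_‖ = 0; simp [h]⟩
    change ‖_‖ + ‖_‖ = 0 at h
    have := (add_eq_zero_iff_of_nonneg (norm_nonneg _) (norm_nonneg _)).1 h
    simpa using this.1

instance : NormedAddCommGroup (GraphNormed L) := .ofCore (normedSpaceCore L)
instance : NormedSpace ℝ (GraphNormed L) := .ofCore (normedSpaceCore L)

theorem norm_le_norm_linearEquiv (e : E) : ‖e‖ ≤ ‖linearEquiv L e‖ := by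
  rw [norm_linearEquiv]; linarith [norm_nonneg (L e)]

def continuousLinearEquiv : E ≃L[ℝ] GraphNormed L :=
  (linearEquiv L).toContinuousLinearEquivOfBounds (1 + ‖L‖) 1
    (fun e => by rw [norm_linearEquiv, add_mul, one_mul]; gcongr; exact L.le_opNorm e)
    (fun y => by simpa using norm_le_norm_linearEquiv L ((linearEquiv L).symm y))

instance [CompleteSpace E] : CompleteSpace (GraphNormed L) :=
  (completeSpace_congr (e := (continuousLinearEquiv L).toEquiv)
    (continuousLinearEquiv L).isUniformEmbedding).1 ‹_›

theorem strictConvexSpace [StrictConvexSpace ℝ F] (hL : Function.Injective L) :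
    StrictConvexSpace ℝ (GraphNormed L) := by
  refine StrictConvexSpace.of_norm_add fun y z hy hz hyz => ?_
  obtain ⟨a, rfl⟩ := (linearEquiv L).surjective y
  obtain ⟨b, rfl⟩ := (linearEquiv L).surjective z
  rw [← map_add, norm_linearEquiv, map_add] at hyz
  rw [norm_linearEquiv] at hy hz
  have hLab : ‖L a + L b‖ = ‖L a‖ + ‖L b‖ := by
    linarith [norm_add_le a b, norm_add_le (L a) (L b)]
  rw [(linearEquiv L).injective.sameRay_map_iff, ← hL.sameRay_map_iff]
  exact sameRay_iff_norm_add.2 hLab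

end GraphNormed

namespace ZeroAtInftyContinuousMap

variable {α β : Type*} [TopologicalSpace α] [SeminormedAddCommGroup β]

theorem norm_apply_le (f : C₀(α, β)) (a : α) : ‖f a‖ ≤ ‖f‖ :=
  norm_toBCF_eq_norm (f := f) ▸ f.toBCF.norm_coe_le_norm a

theorem norm_le_of_forall_le {f : C₀(α, β)} {C : ℝ} (hC : 0 ≤ C) (hf : ∀ a, ‖f a‖ ≤ C) :
    ‖f‖ ≤ C :=
  norm_toBCF_eq_norm (f := f) ▸ (BoundedContinuousFunction.norm_le hC).2 hf

theorem norm_add_le_one {f g : C₀(α, β)} (s : Set α) (hf : ‖f‖ ≤ 1)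
    (hfs : ∀ a ∉ s, ‖f a‖ ≤ 1 / 2) (hg : ‖g‖ ≤ 1 / 2) (hgs : ∀ a ∈ s, g a = 0) :
    ‖f + g‖ ≤ 1 := by
  refine norm_le_of_forall_le zero_le_one fun a => ?_
  rw [add_apply]
  by_cases ha : a ∈ s
  · rw [hgs a ha, add_zero]
    exact (f.norm_apply_le a).trans hf
  · linarith [norm_add_le (f a) (g a), hfs a ha, (g.norm_apply_le a).trans hg]

theorem norm_mul_geometric_rpow_le (f : C₀(ℕ, ℝ)) (n : ℕ) :
    ‖f n * 2⁻¹ ^ n‖ ^ (2 : ℝ≥0∞).toReal ≤ ‖f‖ ^ 2 * 4⁻¹ ^ n := by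
  have h4 : (4⁻¹ : ℝ) ^ n = (2⁻¹ ^ n) ^ 2 := by rw [← pow_mul, mul_comm, pow_mul]; norm_num
  rw [ENNReal.toReal_ofNat, Real.rpow_two, norm_mul, mul_pow, h4, norm_pow, norm_inv,
    Real.norm_ofNat]
  gcongr
  exact f.norm_apply_le n

theorem summable_norm_mul_geometric_rpow (f : C₀(ℕ, ℝ)) :
    Summable fun n => ‖f n * 2⁻¹ ^ n‖ ^ (2 : ℝ≥0∞).toReal :=
  .of_nonneg_of_le (fun _ => by positivity) f.norm_mul_geometric_rpow_le
    ((summable_geometric_of_lt_one (by norm_num) (by norm_num)).mul_left _)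

def weightedL2 : C₀(ℕ, ℝ) →L[ℝ] lp (fun _ : ℕ => ℝ) 2 :=
  LinearMap.mkContinuous
    { toFun := fun f => ⟨fun n => f n * 2⁻¹ ^ n, memℓp_gen f.summable_norm_mul_geometric_rpow⟩
      map_add' := fun f g => lp.ext <| funext fun n => add_mul (f n) (g n) _
      map_smul' := fun c f => lp.ext <| funext fun n => mul_assoc c (f n) _ } 2
    fun f => by
      refine lp.norm_le_of_tsum_le (by norm_num) (by positivity) ?_
      calc ∑' n, ‖f n * 2⁻¹ ^ n‖ ^ (2 : ℝ≥0∞).toReal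
          ≤ ∑' n : ℕ, ‖f‖ ^ 2 * 4⁻¹ ^ n :=
            f.summable_norm_mul_geometric_rpow.tsum_le_tsum f.norm_mul_geometric_rpow_le
              ((summable_geometric_of_lt_one (by norm_num) (by norm_num)).mul_left _)
        _ = ‖f‖ ^ 2 * (4 / 3) := by
            rw [tsum_mul_left, tsum_geometric_of_lt_one (by norm_num) (by norm_num)]; norm_num
        _ ≤ (2 * ‖f‖) ^ (2 : ℝ≥0∞).toReal := by
            rw [ENNReal.toReal_ofNat, Real.rpow_two]; nlinarith [sq_nonneg ‖f‖]

theorem weightedL2_injective : Function.Injective weightedL2 := fun f g h =>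
  ext fun n => mul_right_cancel₀ (pow_ne_zero n (by norm_num)) (congr_arg (· n) h)

end ZeroAtInftyContinuousMap

variable {X Y : Type*} [NormedAddCommGroup X] [NormedSpace ℝ X]
  [NormedAddCommGroup Y] [NormedSpace ℝ Y]

theorem LinearIsometry.exists_ne_zero_norm_add_le_one_of_infinite_dimensional
    (J : X →ₗᵢ[ℝ] C₀(ℕ, ℝ)) (hX : ¬ FiniteDimensional ℝ X) {x : X} (hx : ‖x‖ ≤ 1) :
    ∃ u ≠ 0, ‖x + u‖ ≤ 1 ∧ ‖x - u‖ ≤ 1 := by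
  have hJx : Filter.Tendsto (J x) Filter.atTop (nhds 0) :=
    cocompact_eq_atTop (α := ℕ) ▸ zero_at_infty (J x)
  obtain ⟨N, hN⟩ := Metric.tendsto_atTop.1 hJx (1 / 2) one_half_pos
  let K : X →ₗ[ℝ] Fin N → ℝ :=
    { toFun := fun z i => J z i
      map_add' := fun z w => funext fun i => by simp
      map_smul' := fun c z => funext fun i => by simp }
  obtain ⟨y, hyK, hy⟩ : ∃ y ∈ LinearMap.ker K, y ≠ 0 := Submodule.ne_bot_iff _ |>.1 fun hK =>
    hX (.of_injective K (LinearMap.ker_eq_bot.1 hK))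
  set u := (2 * ‖y‖)⁻¹ • y
  have hu : ‖u‖ = 1 / 2 := by
    rw [norm_smul, norm_inv, norm_mul, Real.norm_ofNat, norm_norm]
    field_simp [norm_ne_zero_iff.2 hy]
  have huN : ∀ n < N, J u n = 0 := fun n hn => by
    simp [u, show J y n = 0 from congr_fun hyK ⟨n, hn⟩]
  have hxN : ∀ n ∉ Set.Iio N, ‖J x n‖ ≤ 1 / 2 := fun n hn => by
    simpa [Real.dist_eq, Real.norm_eq_abs] using (hN n (not_lt.1 hn)).le
  refine ⟨u, by simpa [u] using hy, ?_, ?_⟩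
  · rw [← J.norm_map, map_add]
    exact (J x).norm_add_le_one (Set.Iio N) (by simpa using hx) hxN (by simp [hu]) huN
  · rw [← J.norm_map, map_sub, sub_eq_add_neg]
    exact (J x).norm_add_le_one (g := -J u) (Set.Iio N)
      (by simpa using hx) hxN (by simp [hu]) fun n hn => by simp [huN n hn]

theorem ContinuousLinearMap.apply_eq_zero_of_norm_apply_eq_opNorm [StrictConvexSpace ℝ Y]
    {S : X →L[ℝ] Y} {x u : X} (hSx : ‖S x‖ = ‖S‖) (hadd : ‖x + u‖ ≤ 1)
    (hsub : ‖x - u‖ ≤ 1) : S u = 0 := by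
  have h₁ : ‖S (x + u)‖ ≤ ‖S x‖ := hSx ▸ S.unit_le_opNorm _ hadd
  have h₂ : ‖S (x - u)‖ ≤ ‖S x‖ := hSx ▸ S.unit_le_opNorm _ hsub
  have hsum : S (x + u) + S (x - u) = (2 : ℝ) • S x := by
    rw [← map_add, ← map_smul, two_smul]; congr 1; abel
  have hnorm : ‖S (x + u) + S (x - u)‖ = 2 * ‖S x‖ := by
    rw [hsum, norm_smul, Real.norm_ofNat]
  have heq : S (x + u) = S (x - u) :=
    eq_of_norm_eq_of_norm_add_eq (by linarith [norm_add_le (S (x + u)) (S (x - u))])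
      (by linarith [norm_add_le (S (x + u)) (S (x - u))])
  rw [map_add, map_sub, sub_eq_add_neg, add_right_inj, eq_neg_iff_add_eq_zero, ← two_smul ℝ]
    at heq
  exact (smul_eq_zero.1 heq).resolve_left two_ne_zero

theorem notMem_closure_setOf_normAttaining [StrictConvexSpace ℝ Y]
    (hX : ∀ x : X, ‖x‖ = 1 → ∃ u ≠ 0, ‖x + u‖ ≤ 1 ∧ ‖x - u‖ ≤ 1)
    {T : X →L[ℝ] Y} (hT : ∀ u, ‖u‖ ≤ ‖T u‖) : T ∉ closure {S : X →L[ℝ] Y | NormAttaining S} := by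
  have hdist : ∀ S : X →L[ℝ] Y, NormAttaining S → 1 ≤ ‖T - S‖ := by
    rintro S ⟨x, hx, hSx⟩
    obtain ⟨u, hu, hadd, hsub⟩ := hX x hx
    have hSu := S.apply_eq_zero_of_norm_apply_eq_opNorm hSx hadd hsub
    refine le_of_mul_le_mul_right ?_ (norm_pos_iff.2 hu)
    calc 1 * ‖u‖ ≤ ‖T u‖ := by simpa using hT u
      _ = ‖(T - S) u‖ := by simp [hSu]
      _ ≤ ‖T - S‖ * ‖u‖ := (T - S).le_opNorm u
  intro hT
  obtain ⟨S, hS, hTS⟩ := Metric.mem_closure_iff.1 hT 1 one_pos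
  exact (hdist S hS).not_gt (dist_eq_norm T S ▸ hTS)

end

theorem stmt_12_general (X : Type*) [NormedAddCommGroup X] [NormedSpace ℝ X]
    (J : X →ₗᵢ[ℝ] C₀(ℕ, ℝ))
    (hinf : ¬ FiniteDimensional ℝ X) :
    ∃ (Y : Type) (_ : NormedAddCommGroup Y) (_ : NormedSpace ℝ Y) (_ : CompleteSpace Y)
      (T : X →L[ℝ] Y),
      T ∉ closure {S : X →L[ℝ] Y | NormAttaining S} := by
  let L := ZeroAtInftyContinuousMap.weightedL2
  have : StrictConvexSpace ℝ (GraphNormed L) :=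
    GraphNormed.strictConvexSpace L ZeroAtInftyContinuousMap.weightedL2_injective
  let T : X →L[ℝ] GraphNormed L :=
    (GraphNormed.continuousLinearEquiv L).toContinuousLinearMap ∘L J.toContinuousLinearMap
  refine ⟨GraphNormed L, inferInstance, inferInstance, inferInstance, T,
    notMem_closure_setOf_normAttaining
      (fun x hx => J.exists_ne_zero_norm_add_le_one_of_infinite_dimensional hinf hx.le)
      fun u => ?_⟩
  calc ‖u‖ = ‖J u‖ := (J.norm_map u).symm
    _ ≤ ‖T u‖ := GraphNormed.norm_le_norm_linearEquiv L (J u)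

/-- An infinite-dimensional closed subspace `X` of `c₀` (real sequences converging to zero with
the sup norm, realized as `C₀(ℕ, ℝ)`; we encode the subspace by a linear isometric embedding
`J : X → c₀` with closed range) fails Lindenstrauss property A: there are a real Banach space
`Y` and a bounded linear operator `T : X → Y` which is not in the operator-norm closure of the
norm attaining operators from `X` to `Y`. -/
theorem stmt_12 (X : Type*) [NormedAddCommGroup X] [NormedSpace ℝ X] [CompleteSpace X]
    (J : X →ₗᵢ[ℝ] C₀(ℕ, ℝ)) (hJ : IsClosed (Set.range J))
    (hinf : ¬ FiniteDimensional ℝ X) :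
    ∃ (Y : Type) (_ : NormedAddCommGroup Y) (_ : NormedSpace ℝ Y) (_ : CompleteSpace Y)
      (T : X →L[ℝ] Y),
      T ∉ closure {S : X →L[ℝ] Y | NormAttaining S} :=
  stmt_12_general X J hinf
end
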